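/- Let p ∈ OFS with |p| > 1. Then f(p) ≥ (−gcd(p) + Σ_{i=1}^{|p|} p_i)/(|p| − 1). Moreover, if equality holds and some entry p_i equals 2·p_1, then i = |p| and f(p) = 2·p_1 = max(p). -/

import Mathlib

/-- `OFS p`: `p` is a strictly increasing nonempty finite sequence of positive integers. -/
def OFS (p : List ℕ) : Prop := p ≠ [] ∧ p.Pairwise (· < ·) ∧ ∀ x ∈ p, 0 < x

/-- The reduction operation `R`. -/
def R : List ℕ → List ℕ
  | [] => []
  | [a] => [a]
  | a :: b :: rest => (((b :: rest).map (fun x => x - a)).insert a).mergeSort (· ≤ ·)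

/-- `max(p)` -/
def maxL (p : List ℕ) : ℕ := p.foldr max 0

/-- `gcd(p)` -/
def gcdL (p : List ℕ) : ℕ := p.foldr Nat.gcd 0

/-- Fuel-based auxiliary for `f`; `maxL p + 1` fuel always suffices since
`maxL` strictly decreases under `R` for lists of length `> 1`. -/
def faux : ℕ → List ℕ → ℕ
  | _, [] => 0
  | _, [a] => a
  | 0, _ => 0
  | fuel+1, p => p.headI + faux fuel (R p)

/-- The function `f` of Castelli–Mignosi–Restivo: `f p = p₁` if `|p| = 1`,
and `f p = p₁ + f (R p)` otherwise. -/
def f (p : List ℕ) : ℕ := faux (maxL p + 1) p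

/-- The function `fw` of Tijdeman–Zamboni. -/
def fw (p : List ℕ) : ℕ :=
  if h : 1 < p.length ∧ gcdL p.dropLast = gcdL p ∧ f p.dropLast ≤ maxL p
  then fw p.dropLast
  else f p
termination_by p.length
decreasing_by
  simp only [List.length_dropLast]
  omega

/-- The Fine–Wilf graph `G(p,k)` on vertex set `{1,…,k}` (represented by `Fin k`,
with `v : Fin k` standing for the integer `v+1`); `i` and `j` are adjacent iff
`|i - j|` is an entry of `p`. -/
def G (p : List ℕ) (k : ℕ) : SimpleGraph (Fin k) where
  Adj i j := i ≠ j ∧ (((j : ℕ) - (i : ℕ)) ∈ p ∨ ((i : ℕ) - (j : ℕ)) ∈ p)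
  symm := by
    refine ⟨fun i j h => ?_⟩
    exact ⟨h.1.symm, h.2.symm⟩
  loopless := by
    refine ⟨fun i h => ?_⟩
    exact h.1 rfl

/-- `p` is trim. -/
def Trim (p : List ℕ) : Prop :=
  p.length = 1 ∨ (1 < p.length ∧
    (gcdL p ≠ gcdL p.dropLast ∨ (gcdL p = gcdL p.dropLast ∧ maxL p < f p.dropLast)))


lemma maxL_cons (a : ℕ) (l : List ℕ) : maxL (a :: l) = max a (maxL l) := rfl
lemma gcdL_cons (a : ℕ) (l : List ℕ) : gcdL (a :: l) = Nat.gcd a (gcdL l) := rfl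

lemma le_maxL {x : ℕ} {l : List ℕ} (h : x ∈ l) : x ≤ maxL l := by
  induction l with
  | nil => simp at h
  | cons a t ih =>
    rw [maxL_cons]
    rcases List.mem_cons.1 h with rfl | h
    · exact le_max_left _ _
    · exact le_trans (ih h) (le_max_right _ _)

lemma gcdL_dvd {x : ℕ} {l : List ℕ} (h : x ∈ l) : gcdL l ∣ x := by
  induction l with
  | nil => simp at h
  | cons a t ih =>
    rw [gcdL_cons]
    rcases List.mem_cons.1 h with rfl | h
    · exact Nat.gcd_dvd_left _ _
    · exact dvd_trans (Nat.gcd_dvd_right _ _) (ih h)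

instance : LeftCommutative (max : ℕ → ℕ → ℕ) :=
  ⟨fun a b c => by rw [← max_assoc, max_comm a b, max_assoc]⟩

instance : LeftCommutative (Nat.gcd) :=
  ⟨fun a b c => by rw [← Nat.gcd_assoc, Nat.gcd_comm a b, Nat.gcd_assoc]⟩

lemma maxL_perm {l₁ l₂ : List ℕ} (h : l₁.Perm l₂) : maxL l₁ = maxL l₂ := h.foldr_eq _
lemma gcdL_perm {l₁ l₂ : List ℕ} (h : l₁.Perm l₂) : gcdL l₁ = gcdL l₂ := h.foldr_eq _

lemma sum_map_sub {a : ℕ} {l : List ℕ} (h : ∀ x ∈ l, a ≤ x) :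
    (l.map (fun x => x - a)).sum + a * l.length = l.sum := by
  induction l with
  | nil => simp
  | cons x t ih =>
    have hx := h x (by simp)
    have ht := ih (fun y hy => h y (by simp [hy]))
    simp only [List.map_cons, List.sum_cons, List.length_cons]
    have : a * (t.length + 1) = a * t.length + a := by ring
    omega

lemma maxL_map_sub {a : ℕ} {l : List ℕ} (h : ∀ x ∈ l, a ≤ x) :
    maxL (l.map (fun x => x - a)) = maxL l - a := by
  induction l with
  | nil => simp [maxL]
  | cons x t ih =>
    have hx := h x (by simp)
    have ht := ih (fun y hy => h y (by simp [hy]))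
    simp only [List.map_cons, maxL_cons, ht]
    rcases le_total x (maxL t) with hc | hc
    · rw [max_eq_right hc, max_eq_right (by omega)]
    · rw [max_eq_left hc, max_eq_left (by omega)]

lemma gcd_map_sub {a : ℕ} {l : List ℕ} (h : ∀ x ∈ l, a ≤ x) :
    Nat.gcd a (gcdL (l.map (fun x => x - a))) = Nat.gcd a (gcdL l) := by
  induction l with
  | nil => simp
  | cons x t ih =>
    have hx := h x (by simp)
    have ht := ih (fun y hy => h y (by simp [hy]))
    simp only [List.map_cons, gcdL_cons]
    rw [← Nat.gcd_assoc, Nat.gcd_comm a (x - a), Nat.gcd_assoc, ht,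
      ← Nat.gcd_assoc, Nat.gcd_comm (x - a) a, Nat.gcd_sub_self_right hx, Nat.gcd_assoc]

lemma maxL_mem {l : List ℕ} (h : l ≠ []) : maxL l ∈ l := by
  induction l with
  | nil => simp at h
  | cons a t ih =>
    rw [maxL_cons]
    rcases eq_or_ne t [] with rfl | ht
    · simp [maxL]
    · rcases max_choice a (maxL t) with hc | hc <;> rw [hc]
      · simp
      · exact List.mem_cons_of_mem _ (ih ht)

lemma R_facts {a : ℕ} {b : ℕ} {t : List ℕ}
    (hs : (a :: b :: t).Pairwise (· < ·)) (hpos : ∀ x ∈ a :: b :: t, 0 < x) :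
    OFS (R (a :: b :: t)) ∧
    maxL (R (a :: b :: t)) = max a (maxL (b :: t) - a) ∧
    gcdL (R (a :: b :: t)) = gcdL (a :: b :: t) ∧
    (2 * a ∈ b :: t →
      (R (a :: b :: t)).length = (b :: t).length ∧
      (R (a :: b :: t)).sum + a * (b :: t).length + a = (a :: b :: t).sum ∧
      a ∈ R (a :: b :: t)) ∧
    (2 * a ∉ b :: t →
      (R (a :: b :: t)).length = (b :: t).length + 1 ∧
      (R (a :: b :: t)).sum + a * (b :: t).length = (a :: b :: t).sum) := by
  set l : List ℕ := b :: t with hl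
  set D : List ℕ := l.map (fun x => x - a) with hD
  set q₀ : List ℕ := D.insert a with hq₀
  have hperm : (R (a :: b :: t)).Perm q₀ := List.mergeSort_perm _ _
  have halt : ∀ x ∈ l, a < x := (List.pairwise_cons.1 hs).1
  have hale : ∀ x ∈ l, a ≤ x := fun x hx => le_of_lt (halt x hx)
  have hls : l.Pairwise (· < ·) := (List.pairwise_cons.1 hs).2
  have hamem : a ∈ q₀ := List.mem_insert_self
  have hq₀ne : q₀ ≠ [] := List.ne_nil_of_mem hamem
  -- D sorted strictly
  have hDs : D.Pairwise (· < ·) := by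
    rw [hD, List.pairwise_map]
    exact List.Pairwise.imp_of_mem
      (fun {x y} hx hy hxy => by have := halt x hx; have := halt y hy; omega) hls
  have hDnodup : D.Nodup := hDs.nodup
  have hq₀nodup : q₀.Nodup := by
    by_cases hmem : a ∈ D
    · rw [hq₀, List.insert_of_mem hmem]; exact hDnodup
    · rw [hq₀, List.insert_of_not_mem hmem]; exact hDnodup.cons hmem
  -- sortedness of R
  have hRsortle : (R (a :: b :: t)).Pairwise (· ≤ ·) := by
    have := List.pairwise_mergeSort' (r := fun x y : ℕ => x ≤ y) q₀
    exact this
  have hRsort : (R (a :: b :: t)).Pairwise (· < ·) :=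
    (hRsortle.and (hperm.nodup_iff.2 hq₀nodup)).imp (fun h => lt_of_le_of_ne h.1 h.2)
  -- positivity
  have hq₀pos : ∀ x ∈ q₀, 0 < x := by
    intro x hx
    rcases List.mem_insert_iff.1 hx with hx' | hx'
    · rw [hx']; exact hpos a (by simp)
    · obtain ⟨y, hy, rfl⟩ := List.mem_map.1 hx'
      have hlt := halt y hy
      omega
  have hROFS : OFS (R (a :: b :: t)) := by
    refine ⟨fun hnil => hq₀ne (List.Perm.nil_eq (hnil ▸ hperm)).symm, hRsort, ?_⟩
    exact fun x hx => hq₀pos x (hperm.mem_iff.1 hx)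
  -- key membership equivalence
  have hmem_iff : a ∈ D ↔ 2 * a ∈ l := by
    constructor
    · intro h
      obtain ⟨y, hy, hya⟩ := List.mem_map.1 h
      have h1 := halt y hy
      have hya' : y - a = a := hya
      have : y = 2 * a := by omega
      exact this ▸ hy
    · intro h
      have h2 : (fun x => x - a) (2 * a) = a := by simp only []; omega
      exact List.mem_map.2 ⟨2 * a, h, h2⟩
  -- maxL facts
  have hmaxD : maxL D = maxL l - a := maxL_map_sub hale
  have hmaxR : maxL (R (a :: b :: t)) = max a (maxL l - a) := by
    rw [maxL_perm hperm]
    by_cases hmem : a ∈ D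
    · rw [hq₀, List.insert_of_mem hmem, hmaxD]
      have : a ≤ maxL D := le_maxL hmem
      rw [hmaxD] at this
      omega
    · rw [hq₀, List.insert_of_not_mem hmem, maxL_cons, hmaxD]
  -- gcd facts
  have hgcdR : gcdL (R (a :: b :: t)) = gcdL (a :: b :: t) := by
    rw [gcdL_perm hperm, gcdL_cons]
    by_cases hmem : a ∈ D
    · rw [hq₀, List.insert_of_mem hmem]
      have hd : gcdL D ∣ a := gcdL_dvd hmem
      have : Nat.gcd a (gcdL D) = gcdL D := Nat.gcd_eq_right hd
      rw [← this, gcd_map_sub hale]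
    · rw [hq₀, List.insert_of_not_mem hmem, gcdL_cons, gcd_map_sub hale]
  refine ⟨hROFS, hmaxR, hgcdR, ?_, ?_⟩
  · intro h2a
    have hmem : a ∈ D := hmem_iff.2 h2a
    have hq₀eq : q₀ = D := by rw [hq₀, List.insert_of_mem hmem]
    have hsum : D.sum + a * l.length = l.sum := sum_map_sub hale
    have hlen : D.length = l.length := List.length_map _
    refine ⟨?_, ?_, hperm.mem_iff.2 (hq₀eq ▸ hmem)⟩
    · rw [hperm.length_eq, hq₀eq, hlen]
    · rw [hperm.sum_eq, hq₀eq]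
      simp only [List.sum_cons]
      omega
  · intro h2a
    have hmem : a ∉ D := fun h => h2a (hmem_iff.1 h)
    have hq₀eq : q₀ = a :: D := by rw [hq₀, List.insert_of_not_mem hmem]
    have hsum : D.sum + a * l.length = l.sum := sum_map_sub hale
    have hlen : D.length = l.length := List.length_map _
    constructor
    · rw [hperm.length_eq, hq₀eq]; simp [hlen]
    · rw [hperm.sum_eq, hq₀eq]
      simp only [List.sum_cons]
      omega

lemma maxL_cons_cons {a b : ℕ} {t : List ℕ} (hs : (a :: b :: t).Pairwise (· < ·)) :
    maxL (a :: b :: t) = maxL (b :: t) := by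
  have hab : a < b := ((List.pairwise_cons.1 hs).1) b (by simp)
  have hb : b ≤ maxL (b :: t) := le_maxL (by simp)
  rw [maxL_cons]
  omega

lemma maxR_lt {a b : ℕ} {t : List ℕ}
    (hs : (a :: b :: t).Pairwise (· < ·)) (hpos : ∀ x ∈ a :: b :: t, 0 < x) :
    maxL (R (a :: b :: t)) < maxL (a :: b :: t) := by
  obtain ⟨_, hmaxR, _⟩ := R_facts hs hpos
  have hab : a < b := ((List.pairwise_cons.1 hs).1) b (by simp)
  have hb : b ≤ maxL (b :: t) := le_maxL (by simp)
  have ha : 0 < a := hpos a (by simp)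
  rw [hmaxR, maxL_cons_cons hs]
  exact max_lt (by omega) (by omega)

lemma faux_singleton (n : ℕ) (x : ℕ) : faux n [x] = x := by
  cases n <;> rfl

lemma faux_congr (n : ℕ) : ∀ (m : ℕ) (p : List ℕ), OFS p → maxL p < n → maxL p < m →
    faux n p = faux m p := by
  induction n with
  | zero => intro m p _ h _; omega
  | succ n ih =>
    intro m p hp hn hm
    match p with
    | [] => exact absurd rfl hp.1
    | [x] => rw [faux_singleton, faux_singleton]
    | a :: b :: t =>
      cases m with
      | zero => omega
      | succ m =>
        show a + faux n (R (a :: b :: t)) = a + faux m (R (a :: b :: t))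
        obtain ⟨hOFS, _⟩ := R_facts hp.2.1 hp.2.2
        have hlt := maxR_lt hp.2.1 hp.2.2
        rw [ih m (R (a :: b :: t)) hOFS (by omega) (by omega)]

lemma f_unfold {a b : ℕ} {t : List ℕ}
    (hs : (a :: b :: t).Pairwise (· < ·)) (hpos : ∀ x ∈ a :: b :: t, 0 < x) :
    f (a :: b :: t) = a + f (R (a :: b :: t)) := by
  obtain ⟨hOFS, _⟩ := R_facts hs hpos
  have hlt := maxR_lt hs hpos
  show a + faux (maxL (a :: b :: t)) (R (a :: b :: t)) = a + f (R (a :: b :: t))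
  rw [faux_congr (maxL (a :: b :: t)) (maxL (R (a :: b :: t)) + 1) (R (a :: b :: t)) hOFS
    (by omega) (by omega)]
  rfl

lemma key : ∀ (M : ℕ) (p : List ℕ), maxL p ≤ M → OFS p →
    maxL p ≤ f p ∧
    (1 < p.length →
      p.sum ≤ (p.length - 1) * f p + gcdL p ∧
      ((p.length - 1) * f p + gcdL p = p.sum → 2 * p.headI ∈ p →
        f p = 2 * p.headI ∧ maxL p = 2 * p.headI)) := by
  intro M
  induction M with
  | zero =>
    intro p hM hp
    obtain ⟨x, hx⟩ := List.exists_mem_of_ne_nil p hp.1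
    have h1 := hp.2.2 x hx
    have h2 := le_maxL hx
    omega
  | succ M ih =>
    intro p hM hp
    match p with
    | [] => exact absurd rfl hp.1
    | [x] =>
      refine ⟨?_, by intro h; simp at h⟩
      have hfx : f [x] = x := faux_singleton _ x
      have hmx : maxL [x] = max x 0 := rfl
      rw [hfx]; omega
    | a :: b :: t =>
      have hs := hp.2.1
      have hpos := hp.2.2
      obtain ⟨hROFS, hmaxR, hgcdR, hcaseB, hcaseA⟩ := R_facts hs hpos
      have hlt := maxR_lt hs hpos
      have hIH := ih (R (a :: b :: t)) (by omega) hROFS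
      have hf := f_unfold hs hpos
      have hmaxp : maxL (a :: b :: t) = maxL (b :: t) := maxL_cons_cons hs
      have hab : a < b := (List.pairwise_cons.1 hs).1 b (by simp)
      have hble : b ≤ maxL (b :: t) := le_maxL (by simp)
      have ha : 0 < a := hpos a (by simp)
      have hfq_ge : maxL (R (a :: b :: t)) ≤ f (R (a :: b :: t)) := hIH.1
      have hle1 : maxL (b :: t) - a ≤ maxL (R (a :: b :: t)) := hmaxR ▸ le_max_right _ _
      have hle2 : a ≤ maxL (R (a :: b :: t)) := hmaxR ▸ le_max_left _ _
      refine ⟨by rw [hf]; omega, ?_⟩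
      intro _
      have hL : (a :: b :: t).length - 1 = (b :: t).length := by simp
      suffices h : a + (b :: t).sum ≤ (b :: t).length * (a + f (R (a :: b :: t))) + gcdL (a :: b :: t) ∧
          ((b :: t).length * (a + f (R (a :: b :: t))) + gcdL (a :: b :: t) = a + (b :: t).sum →
            2 * a ∈ a :: b :: t → a + f (R (a :: b :: t)) = 2 * a ∧ maxL (b :: t) = 2 * a) by
        constructor
        · rw [hL, hf, List.sum_cons]; exact h.1
        · intro heq hmem
          rw [hL, hf, List.sum_cons] at heq
          obtain ⟨h1, h2⟩ := h.2 heq hmem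
          exact ⟨by rw [hf]; exact h1, by rw [hmaxp]; exact h2⟩
      by_cases h2a : 2 * a ∈ b :: t
      · -- case B: a is among the differences
        obtain ⟨hlenR, hsumR, hamem⟩ := hcaseB h2a
        have hfa : a ≤ f (R (a :: b :: t)) := le_trans (le_maxL hamem) hfq_ge
        cases t with
        | nil =>
          have hb2a : 2 * a = b := by simpa using h2a
          have hg : gcdL (a :: [b]) = a := by
            show Nat.gcd a (Nat.gcd b 0) = a
            rw [Nat.gcd_zero_right, ← hb2a]
            exact Nat.gcd_eq_left (dvd_mul_left a 2)
          have hsumb : (b :: ([] : List ℕ)).sum = b := by simp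
          have hlb : (b :: ([] : List ℕ)).length = 1 := rfl
          have hmb : maxL (b :: ([] : List ℕ)) = b := by simp [maxL]
          rw [hg, hsumb, hlb, hmb, one_mul]
          exact ⟨by omega, fun heq _ => ⟨by omega, by omega⟩⟩
        | cons c u =>
          have hlen2 : 1 < (R (a :: b :: c :: u)).length := by rw [hlenR]; simp
          have hineqR := (hIH.2 hlen2).1
          rw [hlenR, hgcdR] at hineqR
          have hk : (b :: c :: u).length = (c :: u).length + 1 := rfl
          set q := R (a :: b :: c :: u) with hq
          set fq := f q with hfq
          set k := (c :: u).length with hkk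
          set g := gcdL (a :: b :: c :: u) with hg
          have hineqR' : q.sum ≤ k * fq + g := by
            rw [hk] at hineqR; simpa using hineqR
          have e1 : a * (b :: c :: u).length = k * a + a := by rw [hk]; ring
          have e2 : (b :: c :: u).length * (a + fq) = k * a + a + (k * fq + fq) := by
            rw [hk]; ring
          rw [e1] at hsumR
          rw [e2]
          have hsc : (a :: b :: c :: u).sum = a + (b :: c :: u).sum := List.sum_cons
          have h5 : maxL (b :: c :: u) - a ≤ maxL q := hmaxR ▸ le_max_right a _
          have h6 : 2 * a ≤ maxL (b :: c :: u) := le_maxL h2a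
          have h7 : maxL q ≤ fq := hfq_ge
          exact ⟨by omega, fun heq _ => ⟨by omega, by omega⟩⟩
      · -- case A
        obtain ⟨hlenR, hsumR⟩ := hcaseA h2a
        have hlen2 : 1 < (R (a :: b :: t)).length := by rw [hlenR]; simp
        have hineqR := (hIH.2 hlen2).1
        rw [hlenR, hgcdR] at hineqR
        set q := R (a :: b :: t) with hq
        set fq := f q with hfq
        set g := gcdL (a :: b :: t) with hg
        have hineqR' : q.sum ≤ (b :: t).length * fq + g := by simpa using hineqR
        have e1 : a * (b :: t).length = (b :: t).length * a := by ring
        have e2 : (b :: t).length * (a + fq) = (b :: t).length * a + (b :: t).length * fq := by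
          ring
        rw [e1] at hsumR
        rw [e2]
        have hsc : (a :: b :: t).sum = a + (b :: t).sum := List.sum_cons
        refine ⟨by omega, ?_⟩
        intro heq hmem
        rcases List.mem_cons.1 hmem with hmem' | hmem'
        · omega
        · exact absurd hmem' h2a


theorem good_lower_bound_for_f (p : List ℕ) (hp : OFS p) (hl : 1 < p.length) :
    ((p.sum : ℤ) - gcdL p ≤ ((p.length : ℤ) - 1) * f p) ∧
    (((p.length : ℤ) - 1) * f p = (p.sum : ℤ) - gcdL p →
      ∀ i : ℕ, 1 ≤ i → i ≤ p.length → p.getD (i - 1) 0 = 2 * p.headI →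
        i = p.length ∧ f p = 2 * p.headI ∧ f p = maxL p) := by
  have hk := key (maxL p) p le_rfl hp
  have hineq : p.sum ≤ (p.length - 1) * f p + gcdL p := (hk.2 hl).1
  have heqc := (hk.2 hl).2
  have h1 : ((p.length - 1 : ℕ) : ℤ) = (p.length : ℤ) - 1 := by omega
  have hcast : (((p.length - 1) * f p : ℕ) : ℤ) = ((p.length : ℤ) - 1) * (f p : ℤ) := by
    rw [Nat.cast_mul, h1]
  constructor
  · rw [← hcast]; omega
  · intro heq i hi1 hi2 hgetD
    rw [← hcast] at heq
    have heqN : (p.length - 1) * f p + gcdL p = p.sum := by omega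
    have hidx : i - 1 < p.length := by omega
    rw [List.getD_eq_getElem p 0 hidx] at hgetD
    have hmem : 2 * p.headI ∈ p := hgetD ▸ List.getElem_mem hidx
    obtain ⟨hf2, hmax2⟩ := heqc heqN hmem
    have hlast : p.length - 1 < p.length := by omega
    have hle : p[p.length - 1] ≤ maxL p := le_maxL (List.getElem_mem hlast)
    have hieq : i = p.length := by
      rcases lt_or_eq_of_le (show i - 1 ≤ p.length - 1 by omega) with hc | hc
      · have := List.pairwise_iff_getElem.1 hp.2.1 (i - 1) (p.length - 1) hidx hlast hc
        omega
      · omega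
    exact ⟨hieq, hf2, hf2.trans hmax2.symm⟩
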